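/- arXiv:0908.0506 — 3 statements merged into one kernel-verified Lean document; each statement's English description precedes it below -/
import Mathlib

section
/- For every r ∈ ℝ^K and every θ ≥ 0, ℓ(r,θ) ≤ ((1+α)/(1−α)) · ||J* − Φr||_∞. -/
open Finset Matrix

noncomputable section

/-- The Bellman operator. -/
def bellmanT {X A : Type*} [Fintype X] [Fintype A] [Nonempty A]
    (g : X → A → ℝ) (P : A → X → X → ℝ) (α : ℝ) (J : X → ℝ) : X → ℝ :=
  fun x => Finset.univ.inf' Finset.univ_nonempty fun a => g x a + α * ∑ x', P a x x' * J x'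

/-- The Bellman operator of a stationary policy. -/
def polT {X A : Type*} [Fintype X]
    (g : X → A → ℝ) (P : A → X → X → ℝ) (α : ℝ) (μ : X → A) (J : X → ℝ) : X → ℝ :=
  fun x => g x (μ x) + α * ∑ x', P (μ x) x x' * J x'

/-- Transition matrix of a stationary policy. -/
def polMat {X A : Type*} (P : A → X → X → ℝ) (μ : X → A) : Matrix X X ℝ :=
  Matrix.of fun x x' => P (μ x) x x'

/-- Δ_μ = Σ_k (α P_μ)^k = (I - α P_μ)⁻¹. -/
def deltaMat {X A : Type*} [Fintype X] [DecidableEq X]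
    (P : A → X → X → ℝ) (α : ℝ) (μ : X → A) : Matrix X X ℝ :=
  ∑' k : ℕ, (α • polMat P μ) ^ k

/-- π_{μ,ν} = (1-α) ν^⊤ (I - α P_μ)⁻¹. -/
def piDist {X A : Type*} [Fintype X] [DecidableEq X]
    (P : A → X → X → ℝ) (α : ℝ) (μ : X → A) (ν : X → ℝ) : X → ℝ :=
  fun x => (1 - α) * ∑ x0, ν x0 * deltaMat P α μ x0 x

/-- Cost-to-go of policy μ: Σ_t α^t P_μ^t g_μ. -/
def Jpol {X A : Type*} [Fintype X] [DecidableEq X]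
    (g : X → A → ℝ) (P : A → X → X → ℝ) (α : ℝ) (μ : X → A) : X → ℝ :=
  fun x => ∑' t : ℕ, α ^ t * (((polMat P μ) ^ t) *ᵥ (fun y => g y (μ y))) x

/-- Linear combination of basis functions. -/
def phiR {X : Type*} {K : ℕ} (Φ : X → Fin K → ℝ) (r : Fin K → ℝ) : X → ℝ :=
  fun x => ∑ i, Φ x i * r i

/-- ν-weighted 1-norm. -/
def wnorm1 {X : Type*} [Fintype X] (ν J : X → ℝ) : ℝ := ∑ x, ν x * |J x|

/-- Max norm. -/
def supNorm {X : Type*} [Fintype X] [Nonempty X] (J : X → ℝ) : ℝ :=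
  Finset.univ.sup' Finset.univ_nonempty fun x => |J x|

/-- ψ-weighted max norm ‖J‖_{∞,1/ψ}. -/
def wsupNorm {X : Type*} [Fintype X] [Nonempty X] (ψ J : X → ℝ) : ℝ :=
  Finset.univ.sup' Finset.univ_nonempty fun x => |J x| / ψ x

/-- β(ψ) = max_{x,a} (Σ_{x'} P_a(x,x') ψ(x')) / ψ(x). -/
def betaPsi {X A : Type*} [Fintype X] [Nonempty X] [Fintype A] [Nonempty A]
    (P : A → X → X → ℝ) (ψ : X → ℝ) : ℝ :=
  Finset.univ.sup' Finset.univ_nonempty fun p : X × A => (∑ x', P p.2 p.1 x' * ψ x') / ψ p.1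

/-- Feasible values of the LP defining ℓ(r,θ). -/
def ellSet {X A : Type*} [Fintype X] [Fintype A] [Nonempty A] {K : ℕ}
    (g : X → A → ℝ) (P : A → X → X → ℝ) (α : ℝ) (π : X → ℝ)
    (Φ : X → Fin K → ℝ) (r : Fin K → ℝ) (θ : ℝ) : Set ℝ :=
  {v | ∃ (s : X → ℝ) (γ : ℝ), v = γ / (1 - α) ∧
    (∀ x, phiR Φ r x - bellmanT g P α (phiR Φ r) x ≤ s x + γ) ∧
    (∑ x, π x * s x ≤ θ) ∧ (∀ x, 0 ≤ s x)}

/-- ℓ(r,θ): optimal value of the LP (3.2). -/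
def ellVal {X A : Type*} [Fintype X] [Fintype A] [Nonempty A] {K : ℕ}
    (g : X → A → ℝ) (P : A → X → X → ℝ) (α : ℝ) (π : X → ℝ)
    (Φ : X → Fin K → ℝ) (r : Fin K → ℝ) (θ : ℝ) : ℝ :=
  sInf (ellSet g P α π Φ r θ)

/-!
The choice `s = 0` is feasible for every `θ ≥ 0`, so `ℓ(r,θ) ≤ γ/(1-α)` for any `γ ≥ 0` bounding
the Bellman residual `Φr - TΦr`. With `D = ‖J* - Φr‖_∞` we have `Φr ≤ J* + D`, and since `T` is
monotone and shifts constants by a factor `α`, `J* = TJ* ≤ TΦr + αD`; hence `Φr - TΦr ≤ (1+α)D`.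
Requiring `γ ≥ 0` covers the convention that `sInf` of a set unbounded below is `0`.
-/

lemma Real.sInf_le_of_mem_of_nonneg {s : Set ℝ} {a : ℝ} (ha : a ∈ s) (ha0 : 0 ≤ a) :
    sInf s ≤ a := by
  by_cases hs : BddBelow s
  · exact csInf_le hs ha
  · rwa [Real.sInf_of_not_bddBelow hs]

lemma Finset.sum_mul_le_sum_mul_add {ι : Type*} (t : Finset ι) {w f f' : ι → ℝ} {c : ℝ}
    (hw0 : ∀ i ∈ t, 0 ≤ w i) (hw1 : ∑ i ∈ t, w i = 1) (h : ∀ i ∈ t, f i ≤ f' i + c) :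
    ∑ i ∈ t, w i * f i ≤ ∑ i ∈ t, w i * f' i + c :=
  calc ∑ i ∈ t, w i * f i ≤ ∑ i ∈ t, (w i * f' i + w i * c) :=
        Finset.sum_le_sum fun i hi => by
          rw [← mul_add]; exact mul_le_mul_of_nonneg_left (h i hi) (hw0 i hi)
    _ = ∑ i ∈ t, w i * f' i + c := by rw [Finset.sum_add_distrib, ← Finset.sum_mul, hw1, one_mul]

section SupNorm

variable {X : Type*} [Fintype X] [Nonempty X]

lemma abs_le_supNorm (J : X → ℝ) (x : X) : |J x| ≤ supNorm J :=
  Finset.le_sup' (fun x => |J x|) (Finset.mem_univ x)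

lemma supNorm_nonneg (J : X → ℝ) : 0 ≤ supNorm J :=
  (abs_nonneg _).trans (abs_le_supNorm J (Classical.arbitrary X))

end SupNorm

section Bellman

variable {X A : Type*} [Fintype X] [Fintype A] [Nonempty A]
  {g : X → A → ℝ} {P : A → X → X → ℝ} {α : ℝ}

lemma bellmanT_le_add_of_le_add (hα : 0 ≤ α) (hP0 : ∀ a x x', 0 ≤ P a x x')
    (hP1 : ∀ a x, ∑ x', P a x x' = 1) {J J' : X → ℝ} {c : ℝ} (h : ∀ x, J x ≤ J' x + c)
    (x : X) : bellmanT g P α J x ≤ bellmanT g P α J' x + α * c := by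
  rw [← sub_le_iff_le_add]
  refine Finset.le_inf' _ _ fun a _ => ?_
  have hsum : α * ∑ x', P a x x' * J x' ≤ α * (∑ x', P a x x' * J' x' + c) :=
    mul_le_mul_of_nonneg_left (Finset.univ.sum_mul_le_sum_mul_add
      (fun x' _ => hP0 a x x') (hP1 a x) (fun x' _ => h x')) hα
  calc bellmanT g P α J x - α * c
      ≤ g x a + α * ∑ x', P a x x' * J x' - α * c :=
        sub_le_sub_right (Finset.inf'_le _ (Finset.mem_univ a)) _
    _ ≤ g x a + α * ∑ x', P a x x' * J' x' := by linarith

lemma sub_bellmanT_le [Nonempty X] (hα : 0 ≤ α) (hP0 : ∀ a x x', 0 ≤ P a x x')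
    (hP1 : ∀ a x, ∑ x', P a x x' = 1) {Jstar : X → ℝ} (hJstar : bellmanT g P α Jstar = Jstar)
    (J : X → ℝ) (x : X) :
    J x - bellmanT g P α J x ≤ (1 + α) * supNorm (fun x => Jstar x - J x) := by
  set D := supNorm (fun x => Jstar x - J x)
  have hdist (y : X) : |Jstar y - J y| ≤ D := abs_le_supNorm (fun x => Jstar x - J x) y
  have hJ_le : J x ≤ Jstar x + D := by linarith [(abs_le.mp (hdist x)).1]
  have hJstar_le : Jstar x ≤ bellmanT g P α J x + α * D := by
    rw [← hJstar]
    exact bellmanT_le_add_of_le_add hα hP0 hP1 (fun y => by linarith [(abs_le.mp (hdist y)).2]) x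
  linarith

end Bellman

lemma ellVal_le_of_sub_bellmanT_le {X A : Type*} [Fintype X] [Fintype A] [Nonempty A] {K : ℕ}
    {g : X → A → ℝ} {P : A → X → X → ℝ} {α : ℝ} (hα : α < 1) (π : X → ℝ)
    (Φ : X → Fin K → ℝ) (r : Fin K → ℝ) {θ : ℝ} (hθ : 0 ≤ θ) {γ : ℝ} (hγ : 0 ≤ γ)
    (h : ∀ x, phiR Φ r x - bellmanT g P α (phiR Φ r) x ≤ γ) :
    ellVal g P α π Φ r θ ≤ γ / (1 - α) := by
  refine Real.sInf_le_of_mem_of_nonneg ⟨0, γ, rfl, fun x => ?_, ?_, fun _ => le_rfl⟩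
    (div_nonneg hγ (sub_nonneg.mpr hα.le))
  · simpa using h x
  · simpa using hθ

theorem ell_le_sup_norm_bound_general
    {X A : Type*} [Fintype X] [Nonempty X] [Fintype A] [Nonempty A] [DecidableEq X] {K : ℕ}
    (g : X → A → ℝ) (P : A → X → X → ℝ) (α : ℝ)
    (hα0 : 0 < α) (hα1 : α < 1)
    (hP0 : ∀ a x x', 0 ≤ P a x x') (hP1 : ∀ a x, ∑ x', P a x x' = 1)
    (Jstar : X → ℝ) (hJstar : bellmanT g P α Jstar = Jstar)
    (μs : X → A)
    (ν : X → ℝ)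
    (Φ : X → Fin K → ℝ) (r : Fin K → ℝ) (θ : ℝ) (hθ : 0 ≤ θ) :
    ellVal g P α (piDist P α μs ν) Φ r θ ≤
      ((1 + α) / (1 - α)) * supNorm (fun x => Jstar x - phiR Φ r x) := by
  rw [div_mul_eq_mul_div]
  exact ellVal_le_of_sub_bellmanT_le hα1 _ Φ r hθ
    (mul_nonneg (by linarith) (supNorm_nonneg _))
    (sub_bellmanT_le hα0.le hP0 hP1 hJstar (phiR Φ r))

/-- ℓ(r,θ) ≤ ((1+α)/(1-α)) ‖J* - Φr‖_∞ for all r and θ ≥ 0. -/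
theorem ell_le_sup_norm_bound
    {X A : Type*} [Fintype X] [Nonempty X] [Fintype A] [Nonempty A] [DecidableEq X] {K : ℕ}
    (g : X → A → ℝ) (P : A → X → X → ℝ) (α : ℝ)
    (hα0 : 0 < α) (hα1 : α < 1)
    (hP0 : ∀ a x x', 0 ≤ P a x x') (hP1 : ∀ a x, ∑ x', P a x x' = 1)
    (Jstar : X → ℝ) (hJstar : bellmanT g P α Jstar = Jstar)
    (μs : X → A) (hμs : polT g P α μs Jstar = bellmanT g P α Jstar)
    (ν : X → ℝ) (hν0 : ∀ x, 0 ≤ ν x) (hν1 : ∑ x, ν x = 1)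
    (Φ : X → Fin K → ℝ) (r : Fin K → ℝ) (θ : ℝ) (hθ : 0 ≤ θ) :
    ellVal g P α (piDist P α μs ν) Φ r θ ≤
      ((1 + α) / (1 - α)) * supNorm (fun x => Jstar x - phiR Φ r x) :=
  ell_le_sup_norm_bound_general g P α hα0 hα1 hP0 hP1 Jstar hJstar μs ν Φ r θ hθ
end
end

section
/- Let r* minimize ||J* − Φr||_∞ over r ∈ ℝ^K, let Ω(r*) = argmax_{x∈𝒳} (Φr*(x) − TΦr*(x)), assume π_{μ*,ν}(Ω(r*)) > 0, and define U_SALP(θ) = ||J* − Φr*||_∞ + ℓ(r*,θ) + 2θ/(1−α). Then the right derivative of U_SALP at θ = 0 equals (1/(1−α)) [ 2 − (Σ_{x∈Ω(r*)} π_{μ*,ν}(x))^{−1} ]. -/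
/-!
For small `θ` the LP defining `ℓ(r*, θ)` is solved by spending the whole slack budget `θ` on the
maximisers `Ω` of the Bellman residual `d = Φr* - TΦr*`: with `s = θ / π(Ω)` on `Ω` and `0`
elsewhere, `γ` drops from `max d` to `max d - θ / π(Ω)`, and no feasible `(s, γ)` does better since
`π(Ω) (max d - γ) ≤ π ⬝ s ≤ θ`. This `s` stays feasible while `θ / π(Ω)` is below the gap between
`max d` and the other values of `d`, so `U` is affine on a right neighbourhood of `0`, with slope
`(2 - π(Ω)⁻¹) / (1 - α)`.
-/

open Finset Matrix

noncomputable section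

section DiscountedOccupancy

variable {X A : Type*} [Fintype X] [DecidableEq X] {P : A → X → X → ℝ} {α : ℝ}

theorem deltaMat_nonneg (hα : 0 ≤ α) (hP : ∀ a x x', 0 ≤ P a x x') (μ : X → A) (x y : X) :
    0 ≤ deltaMat P α μ x y := by
  -- `tsum_nonneg` needs no summability: a divergent `tsum` is `0`.
  have hterm (k : ℕ) : (0 : X → X → ℝ) ≤ (α • polMat P μ) ^ k := fun i j =>
    Matrix.pow_apply_nonneg (fun _ _ => mul_nonneg hα (hP _ _ _)) k i j
  exact tsum_nonneg hterm x y

theorem piDist_nonneg (hα0 : 0 ≤ α) (hα1 : α ≤ 1) (hP : ∀ a x x', 0 ≤ P a x x')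
    (μ : X → A) {ν : X → ℝ} (hν : ∀ x, 0 ≤ ν x) (x : X) : 0 ≤ piDist P α μ ν x :=
  mul_nonneg (by linarith) <|
    Finset.sum_nonneg fun x₀ _ => mul_nonneg (hν x₀) (deltaMat_nonneg hα0 hP μ x₀ x)

end DiscountedOccupancy

def bellmanResidual {X A : Type*} [Fintype X] [Fintype A] [Nonempty A]
    (g : X → A → ℝ) (P : A → X → X → ℝ) (α : ℝ) (J : X → ℝ) : X → ℝ :=
  fun x => J x - bellmanT g P α J x

section SlackLP

open Filter Topology

variable {X : Type*} [Fintype X] {d π : X → ℝ} {M p θ γ : ℝ}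

def slackSet (d π : X → ℝ) (θ : ℝ) : Set ℝ :=
  {γ | ∃ s : X → ℝ, (∀ x, d x ≤ s x + γ) ∧ ∑ x, π x * s x ≤ θ ∧ ∀ x, 0 ≤ s x}

theorem sum_level_mul_sub_le_of_mem_slackSet (hπ : ∀ x, 0 ≤ π x)
    (hγ : γ ∈ slackSet d π θ) : (∑ x with d x = M, π x) * (M - γ) ≤ θ := by
  obtain ⟨s, hds, hsθ, hs⟩ := hγ
  calc (∑ x with d x = M, π x) * (M - γ) = ∑ x with d x = M, π x * (M - γ) := Finset.sum_mul ..
    _ ≤ ∑ x with d x = M, π x * s x := Finset.sum_le_sum fun x hx => by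
        have hdx := hds x
        rw [(Finset.mem_filter.1 hx).2] at hdx
        exact mul_le_mul_of_nonneg_left (by linarith) (hπ x)
    _ ≤ ∑ x, π x * s x := Finset.sum_le_sum_of_subset_of_nonneg (Finset.filter_subset _ _)
        fun x _ _ => mul_nonneg (hπ x) (hs x)
    _ ≤ θ := hsθ

theorem sub_div_mem_slackSet (hpΩ : ∑ x with d x = M, π x = p) (hp : 0 < p) (hθ0 : 0 ≤ θ)
    (hθ : ∀ x, d x ≠ M → θ / p ≤ M - d x) : M - θ / p ∈ slackSet d π θ := by
  refine ⟨fun x => if d x = M then θ / p else 0, fun x => ?_, ?_, fun x => ?_⟩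
  · dsimp only
    split_ifs with h
    · linarith
    · linarith [hθ x h]
  · simp only [mul_ite, mul_zero, ← Finset.sum_filter, ← Finset.sum_mul, hpΩ,
      mul_div_cancel₀ θ hp.ne', le_refl]
  · dsimp only
    split_ifs <;> positivity

theorem isLeast_slackSet (hπ : ∀ x, 0 ≤ π x) (hpΩ : ∑ x with d x = M, π x = p) (hp : 0 < p)
    (hθ0 : 0 ≤ θ) (hθ : ∀ x, d x ≠ M → θ / p ≤ M - d x) :
    IsLeast (slackSet d π θ) (M - θ / p) := by
  refine ⟨sub_div_mem_slackSet hpΩ hp hθ0 hθ, fun γ hγ => ?_⟩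
  have h := sum_level_mul_sub_le_of_mem_slackSet (M := M) hπ hγ
  rw [hpΩ] at h
  rw [sub_le_comm, le_div_iff₀ hp]
  linarith

theorem eventually_div_le_sub (hdM : ∀ x, d x ≤ M) (p : ℝ) :
    ∀ᶠ θ in 𝓝 0, ∀ x, d x ≠ M → θ / p ≤ M - d x := by
  refine eventually_all.2 fun x => ?_
  by_cases h : d x = M
  · exact Eventually.of_forall fun _ h' => absurd h h'
  · have hgap : 0 < M - d x := sub_pos.2 ((hdM x).lt_of_ne h)
    have hlim : Tendsto (fun θ : ℝ => θ / p) (𝓝 0) (𝓝 0) :=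
      (continuous_id.div_const p).tendsto' 0 0 (zero_div p)
    filter_upwards [hlim.eventually (eventually_le_nhds hgap)] with θ hθ _ using hθ

end SlackLP

section LPValue

variable {X A : Type*} [Fintype X] [Fintype A] [Nonempty A] {K : ℕ}
  {g : X → A → ℝ} {P : A → X → X → ℝ} {α : ℝ} {π : X → ℝ} {Φ : X → Fin K → ℝ} {r : Fin K → ℝ}
  {θ : ℝ}

theorem ellSet_eq_image_slackSet :
    ellSet g P α π Φ r θ =
      (· / (1 - α)) '' slackSet (bellmanResidual g P α (phiR Φ r)) π θ := by
  ext v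
  constructor
  · rintro ⟨s, γ, rfl, hfeas⟩
    exact ⟨γ, ⟨s, hfeas⟩, rfl⟩
  · rintro ⟨γ, ⟨s, hfeas⟩, rfl⟩
    exact ⟨s, γ, rfl, hfeas⟩

theorem ellVal_eq_div_of_isLeast (hα : α < 1) {γ : ℝ}
    (hγ : IsLeast (slackSet (bellmanResidual g P α (phiR Φ r)) π θ) γ) :
    ellVal g P α π Φ r θ = γ / (1 - α) := by
  have hmono : Monotone (· / (1 - α)) := fun _ _ h =>
    div_le_div_of_nonneg_right h (sub_pos.2 hα).le
  rw [ellVal, ellSet_eq_image_slackSet]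
  exact (hmono.map_isLeast hγ).csInf_eq

end LPValue

theorem setOf_forall_le_eq_sup' {X : Type*} [Fintype X] [Nonempty X] (d : X → ℝ) :
    {y | ∀ y', d y' ≤ d y} = {y | d y = Finset.univ.sup' Finset.univ_nonempty d} := by
  ext y
  refine ⟨fun h => le_antisymm (Finset.le_sup' d (Finset.mem_univ y))
    (Finset.sup'_le _ _ fun y' _ => h y'), fun h y' => ?_⟩
  exact h ▸ Finset.le_sup' d (Finset.mem_univ y')

theorem U_SALP_right_derivative_at_zero_general
    {X A : Type*} [Fintype X] [Nonempty X] [Fintype A] [Nonempty A] [DecidableEq X] {K : ℕ}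
    (g : X → A → ℝ) (P : A → X → X → ℝ) (α : ℝ)
    (hα0 : 0 < α) (hα1 : α < 1)
    (hP0 : ∀ a x x', 0 ≤ P a x x')
    (Jstar : X → ℝ)
    (μs : X → A)
    (ν : X → ℝ) (hν0 : ∀ x, 0 ≤ ν x)
    (Φ : X → Fin K → ℝ)
    (rstar : Fin K → ℝ)
    -- π_{μ*,ν}(Ω(r*)), assumed positive:
    (pOmega : ℝ)
    (hpOmega : pOmega = ∑ x, Set.indicator
      {y | ∀ y', phiR Φ rstar y' - bellmanT g P α (phiR Φ rstar) y' ≤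
                 phiR Φ rstar y - bellmanT g P α (phiR Φ rstar) y}
      (piDist P α μs ν) x)
    (hpos : 0 < pOmega)
    (U : ℝ → ℝ)
    (hU : ∀ θ, U θ = supNorm (fun x => Jstar x - phiR Φ rstar x) +
      ellVal g P α (piDist P α μs ν) Φ rstar θ + 2 * θ / (1 - α)) :
    HasDerivWithinAt U ((1 / (1 - α)) * (2 - pOmega⁻¹)) (Set.Ici 0) 0 := by
  set d := bellmanResidual g P α (phiR Φ rstar)
  set M := Finset.univ.sup' Finset.univ_nonempty d
  have hπ := piDist_nonneg hα0.le hα1.le hP0 μs hν0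
  have hΩ : {y | ∀ y', phiR Φ rstar y' - bellmanT g P α (phiR Φ rstar) y' ≤
      phiR Φ rstar y - bellmanT g P α (phiR Φ rstar) y} = {y | d y = M} :=
    setOf_forall_le_eq_sup' d
  have hpΩ : ∑ x with d x = M, piDist P α μs ν x = pOmega := by
    rw [hpOmega, hΩ, Finset.sum_filter]
    simp only [Set.indicator_apply, Set.mem_ofPred_eq]
  have hdM : ∀ x, d x ≤ M := fun x => Finset.le_sup' d (Finset.mem_univ x)
  have hgap := eventually_div_le_sub hdM pOmega
  have hU_affine : U =ᶠ[nhdsWithin 0 (Set.Ici 0)]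
      fun θ => U 0 + θ * ((1 / (1 - α)) * (2 - pOmega⁻¹)) := by
    filter_upwards [self_mem_nhdsWithin, nhdsWithin_le_nhds hgap] with θ hθ0 hθ
    rw [hU, hU, ellVal_eq_div_of_isLeast hα1 (isLeast_slackSet hπ hpΩ hpos hθ0 hθ),
      ellVal_eq_div_of_isLeast hα1 (isLeast_slackSet hπ hpΩ hpos le_rfl hgap.self_of_nhds)]
    field_simp [(sub_pos.2 hα1).ne']
    ring
  exact ((hasDerivAt_mul_const _).const_add (U 0)).hasDerivWithinAt.congr_of_eventuallyEq
    hU_affine (by simp)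

/-- Corollary 1(ii): the right derivative of U_SALP at θ = 0 equals
(1/(1-α)) (2 - (π_{μ*,ν}(Ω(r*)))⁻¹). -/
theorem U_SALP_right_derivative_at_zero
    {X A : Type*} [Fintype X] [Nonempty X] [Fintype A] [Nonempty A] [DecidableEq X] {K : ℕ}
    (g : X → A → ℝ) (P : A → X → X → ℝ) (α : ℝ)
    (hα0 : 0 < α) (hα1 : α < 1)
    (hP0 : ∀ a x x', 0 ≤ P a x x') (hP1 : ∀ a x, ∑ x', P a x x' = 1)
    (Jstar : X → ℝ) (hJstar : bellmanT g P α Jstar = Jstar)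
    (μs : X → A) (hμs : polT g P α μs Jstar = bellmanT g P α Jstar)
    (ν : X → ℝ) (hν0 : ∀ x, 0 ≤ ν x) (hν1 : ∑ x, ν x = 1)
    (Φ : X → Fin K → ℝ)
    (rstar : Fin K → ℝ)
    (hrstar : ∀ r : Fin K → ℝ,
      supNorm (fun x => Jstar x - phiR Φ rstar x) ≤ supNorm (fun x => Jstar x - phiR Φ r x))
    -- π_{μ*,ν}(Ω(r*)), assumed positive:
    (pOmega : ℝ)
    (hpOmega : pOmega = ∑ x, Set.indicator
      {y | ∀ y', phiR Φ rstar y' - bellmanT g P α (phiR Φ rstar) y' ≤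
                 phiR Φ rstar y - bellmanT g P α (phiR Φ rstar) y}
      (piDist P α μs ν) x)
    (hpos : 0 < pOmega)
    (U : ℝ → ℝ)
    (hU : ∀ θ, U θ = supNorm (fun x => Jstar x - phiR Φ rstar x) +
      ellVal g P α (piDist P α μs ν) Φ rstar θ + 2 * θ / (1 - α)) :
    HasDerivWithinAt U ((1 / (1 - α)) * (2 - pOmega⁻¹)) (Set.Ici 0) 0 :=
  U_SALP_right_derivative_at_zero_general g P α hα0 hα1 hP0 Jstar μs ν hν0 Φ rstar pOmega hpOmega
    hpos U hU
end
end

section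
/- For any J ∈ ℝ^𝒳, setting s = (J − TJ)^+ (the componentwise positive part), one has TJ ≤ T_{μ*} J ≤ J* + Δ* s, where Δ* = (I − α P_{μ*})^{−1}. -/
open Finset Matrix

noncomputable section

/-!
Write `Q = α P_{μ*}` and `h = J - J*`. Since `J* = T_{μ*} J*`, the gap `T_{μ*} J - J*` equals `Q h`,
so `h - Q h = J - T_{μ*} J ≤ J - T J ≤ s`. The resolvent `Δ* = ∑ Qᵏ` is an entrywise nonnegative
inverse of `1 - Q` (a geometric series, as `Q` has ∞-operator norm `α < 1`), hence `h ≤ Δ* s`, and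
then `Q h ≤ Q Δ* s = Δ* s - s ≤ Δ* s`.
-/

namespace Matrix

theorem mulVec_mono_of_nonneg {m n R : Type*} [Fintype n] [Semiring R] [PartialOrder R]
    [IsOrderedRing R] {M : Matrix m n R} (hM : ∀ i j, 0 ≤ M i j) {u v : n → R} (huv : u ≤ v) :
    M *ᵥ u ≤ M *ᵥ v := fun i =>
  dotProduct_le_dotProduct_of_nonneg_left huv (hM i)

section Resolvent

variable {n R : Type*} [Fintype n] [DecidableEq n] [Ring R] [PartialOrder R] [IsOrderedRing R]
  {D Q : Matrix n n R}

theorem le_mulVec_of_sub_mulVec_le (hD : ∀ i j, 0 ≤ D i j) (hDQ : D * (1 - Q) = 1)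
    {h s : n → R} (hs : h - Q *ᵥ h ≤ s) : h ≤ D *ᵥ s :=
  calc h = D *ᵥ ((1 - Q) *ᵥ h) := by rw [mulVec_mulVec, hDQ, one_mulVec]
    _ = D *ᵥ (h - Q *ᵥ h) := by rw [sub_mulVec, one_mulVec]
    _ ≤ D *ᵥ s := mulVec_mono_of_nonneg hD hs

theorem mulVec_mulVec_le_of_one_sub_mul_eq_one (hQD : (1 - Q) * D = 1) {s : n → R}
    (hs : 0 ≤ s) : Q *ᵥ (D *ᵥ s) ≤ D *ᵥ s := by
  have hQD' : Q * D = D - 1 := by rw [sub_mul, one_mul] at hQD; rw [← hQD]; abel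
  rw [mulVec_mulVec, hQD', sub_mulVec, one_mulVec]
  exact sub_le_self _ hs

end Resolvent

section Stochastic

variable {n : Type*} [Fintype n] [DecidableEq n] {M : Matrix n n ℝ}

section LinftyOp

attribute [local instance] Matrix.linftyOpNormedAddCommGroup Matrix.linftyOpNormedRing
  Matrix.linftyOpNormedSpace

theorem linfty_opNorm_le_one_of_mem_rowStochastic (hM : M ∈ rowStochastic ℝ n) : ‖M‖ ≤ 1 := by
  rw [linfty_opNorm_def, NNReal.coe_le_one, Finset.sup_le_iff]
  intro i _
  rw [← NNReal.coe_le_one, NNReal.coe_sum]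
  simp only [coe_nnnorm, Real.norm_of_nonneg (nonneg_of_mem_rowStochastic hM)]
  exact (sum_row_of_mem_rowStochastic hM i).le

theorem summable_pow_smul_of_mem_rowStochastic (hM : M ∈ rowStochastic ℝ n) {α : ℝ}
    (hα : |α| < 1) : Summable fun k : ℕ => (α • M) ^ k := by
  refine summable_geometric_of_norm_lt_one ?_
  calc ‖α • M‖ ≤ ‖α‖ * ‖M‖ := norm_smul_le α M
    _ ≤ |α| * 1 := by
      rw [Real.norm_eq_abs]; gcongr; exact linfty_opNorm_le_one_of_mem_rowStochastic hM
    _ < 1 := by rwa [mul_one]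

end LinftyOp

theorem tsum_pow_smul_apply_nonneg (hM : M ∈ rowStochastic ℝ n) {α : ℝ} (hα0 : 0 ≤ α)
    (hα1 : α < 1) (i j : n) : 0 ≤ (∑' k : ℕ, (α • M) ^ k) i j := by
  have hsum := (summable_pow_smul_of_mem_rowStochastic hM (abs_lt.2 ⟨by linarith, hα1⟩)).hasSum
  refine (Pi.hasSum.1 (Pi.hasSum.1 hsum i) j).nonneg fun k => ?_
  rw [smul_pow, smul_apply, smul_eq_mul]
  exact mul_nonneg (pow_nonneg hα0 k) (nonneg_of_mem_rowStochastic (pow_mem hM k))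

end Stochastic

end Matrix

section Policy

variable {X A : Type*} [Fintype X] (g : X → A → ℝ) (P : A → X → X → ℝ) (α : ℝ)

theorem bellmanT_le_polT [Fintype A] [Nonempty A] (μ : X → A) (J : X → ℝ) :
    bellmanT g P α J ≤ polT g P α μ J := fun x =>
  Finset.inf'_le _ (Finset.mem_univ (μ x))

theorem polT_sub_polT (μ : X → A) (u v : X → ℝ) :
    polT g P α μ u - polT g P α μ v = (α • polMat P μ) *ᵥ (u - v) := by
  ext x
  rw [mulVec_sub, smul_mulVec, smul_mulVec]
  simp only [polT, Pi.sub_apply, Pi.smul_apply, smul_eq_mul, mulVec, dotProduct, polMat, of_apply]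
  ring

variable [DecidableEq X] {P} {α} {μ : X → A}

theorem polMat_mem_rowStochastic (hP0 : ∀ a x x', 0 ≤ P a x x')
    (hP1 : ∀ a x, ∑ x', P a x x' = 1) (μ : X → A) : polMat P μ ∈ rowStochastic ℝ X :=
  mem_rowStochastic_iff_sum.2 ⟨fun x x' => hP0 (μ x) x x', fun x => hP1 (μ x) x⟩

theorem deltaMat_mul_one_sub (hM : polMat P μ ∈ rowStochastic ℝ X) (hα : |α| < 1) :
    deltaMat P α μ * (1 - α • polMat P μ) = 1 :=
  (summable_pow_smul_of_mem_rowStochastic hM hα).tsum_pow_mul_one_sub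

theorem one_sub_mul_deltaMat (hM : polMat P μ ∈ rowStochastic ℝ X) (hα : |α| < 1) :
    (1 - α • polMat P μ) * deltaMat P α μ = 1 :=
  (summable_pow_smul_of_mem_rowStochastic hM hα).one_sub_mul_tsum_pow

theorem deltaMat_nonneg_s14 (hM : polMat P μ ∈ rowStochastic ℝ X) (hα0 : 0 ≤ α) (hα1 : α < 1)
    (x y : X) : 0 ≤ deltaMat P α μ x y :=
  tsum_pow_smul_apply_nonneg hM hα0 hα1 x y

end Policy

theorem TJ_le_Tmustar_le_Jstar_add_general
    {X A : Type*} [Fintype X] [Fintype A] [Nonempty A] [DecidableEq X]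
    (g : X → A → ℝ) (P : A → X → X → ℝ) (α : ℝ)
    (hα0 : 0 < α) (hα1 : α < 1)
    (hP0 : ∀ a x x', 0 ≤ P a x x') (hP1 : ∀ a x, ∑ x', P a x x' = 1)
    (Jstar : X → ℝ) (hJstar : bellmanT g P α Jstar = Jstar)
    (μs : X → A) (hμs : polT g P α μs Jstar = bellmanT g P α Jstar)
    (J : X → ℝ) :
    ∀ x, bellmanT g P α J x ≤ polT g P α μs J x ∧
      polT g P α μs J x ≤
        Jstar x + (deltaMat P α μs *ᵥ (fun y => max (J y - bellmanT g P α J y) 0)) x := by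
  set Q := α • polMat P μs
  set s : X → ℝ := fun y => max (J y - bellmanT g P α J y) 0
  have hM := polMat_mem_rowStochastic hP0 hP1 μs
  have hα : |α| < 1 := abs_lt.2 ⟨by linarith, hα1⟩
  have hTJ := bellmanT_le_polT g P α μs J
  have hgap : polT g P α μs J - Jstar = Q *ᵥ (J - Jstar) := by
    conv_lhs => rw [← hJstar, ← hμs]
    exact polT_sub_polT g P α μs J Jstar
  have hJ : J - Jstar ≤ deltaMat P α μs *ᵥ s := by
    refine le_mulVec_of_sub_mulVec_le (deltaMat_nonneg_s14 hM hα0.le hα1)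
      (deltaMat_mul_one_sub hM hα) ?_
    calc J - Jstar - Q *ᵥ (J - Jstar) = J - polT g P α μs J := by rw [← hgap]; abel
      _ ≤ J - bellmanT g P α J := sub_le_sub_left hTJ J
      _ ≤ s := fun y => le_max_left _ _
  have hQ : ∀ x y, 0 ≤ Q x y := fun x y => mul_nonneg hα0.le (nonneg_of_mem_rowStochastic hM)
  have hpol : polT g P α μs J - Jstar ≤ deltaMat P α μs *ᵥ s := by
    rw [hgap]
    exact (mulVec_mono_of_nonneg hQ hJ).trans <|
      mulVec_mulVec_le_of_one_sub_mul_eq_one (one_sub_mul_deltaMat hM hα) fun y => le_max_right _ _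
  exact fun x => ⟨hTJ x, sub_le_iff_le_add'.1 (hpol x)⟩

/-- with s = (J - TJ)^+, one has TJ ≤ T_{μ*}J ≤ J* + Δ* s. -/
theorem TJ_le_Tmustar_le_Jstar_add
    {X A : Type*} [Fintype X] [Nonempty X] [Fintype A] [Nonempty A] [DecidableEq X]
    (g : X → A → ℝ) (P : A → X → X → ℝ) (α : ℝ)
    (hα0 : 0 < α) (hα1 : α < 1)
    (hP0 : ∀ a x x', 0 ≤ P a x x') (hP1 : ∀ a x, ∑ x', P a x x' = 1)
    (Jstar : X → ℝ) (hJstar : bellmanT g P α Jstar = Jstar)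
    (μs : X → A) (hμs : polT g P α μs Jstar = bellmanT g P α Jstar)
    (J : X → ℝ) :
    ∀ x, bellmanT g P α J x ≤ polT g P α μs J x ∧
      polT g P α μs J x ≤
        Jstar x + (deltaMat P α μs *ᵥ (fun y => max (J y - bellmanT g P α J y) 0)) x :=
  TJ_le_Tmustar_le_Jstar_add_general g P α hα0 hα1 hP0 hP1 Jstar hJstar μs hμs J
end
end
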